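/- Let f(x) = -x·log₂(x) - (1-x)·log₂(1-x) for 0 < x < 1, with f(0) = f(1) = 0. Then for all 0 ≤ x ≤ 1, f((1-x)/2) ≤ 1 - x²/(2·ln 2). -/

import Mathlib

/-! In natural logarithms the claim is `H((1 - x)/2) ≤ log 2 - x²/2`, with equality at `x = 0`.
The derivative of the difference is `x - (log (1 + x) - log (1 - x))/2 ≤ 0`, because
`log (1 + x) - log (1 - x) = 2 artanh x` has a power series with nonnegative terms on `[0, 1)`
whose first term is `2x`. -/

open Real Set

/-- The binary entropy function `f(x) = -x·log₂ x - (1-x)·log₂(1-x)`.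
(Since `Real.logb 2 0 = 0` by convention, this already satisfies `f(0) = f(1) = 0`.) -/
noncomputable def binEnt (x : ℝ) : ℝ :=
  -x * Real.logb 2 x - (1 - x) * Real.logb 2 (1 - x)

lemma two_mul_le_log_one_add_sub_log_one_sub {x : ℝ} (hx0 : 0 ≤ x) (hx1 : x < 1) :
    2 * x ≤ log (1 + x) - log (1 - x) := by
  have hsum := hasSum_log_sub_log_of_abs_lt_one (abs_lt.2 ⟨by linarith, hx1⟩)
  simpa using le_hasSum hsum 0 fun k _ ↦ by positivity

lemma binEnt_eq_binEntropy_div_log_two (p : ℝ) : binEnt p = binEntropy p / log 2 := by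
  simp only [binEnt, binEntropy, logb, log_inv]
  ring

lemma hasDerivAt_binEntropy_one_sub_div_two {y : ℝ} (hy0 : -1 < y) (hy1 : y < 1) :
    HasDerivAt (fun y ↦ binEntropy ((1 - y) / 2)) (-(log (1 + y) - log (1 - y)) / 2) y := by
  have hp0 : (1 - y) / 2 ≠ 0 := by linarith
  have hp1 : (1 - y) / 2 ≠ 1 := by linarith
  have hinner : HasDerivAt (fun y : ℝ ↦ (1 - y) / 2) (-1 / 2) y := by
    simpa using ((hasDerivAt_id y).const_sub 1).div_const 2
  refine ((hasDerivAt_binEntropy hp0 hp1).comp y hinner).congr_deriv ?_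
  rw [show 1 - (1 - y) / 2 = (1 + y) / 2 by ring, log_div (by linarith) two_ne_zero,
    log_div (by linarith) two_ne_zero]
  ring

lemma binEntropy_one_sub_div_two_le_log_two_sub {x : ℝ} (hx0 : 0 ≤ x) (hx1 : x ≤ 1) :
    binEntropy ((1 - x) / 2) ≤ log 2 - x ^ 2 / 2 := by
  set h : ℝ → ℝ := fun y ↦ binEntropy ((1 - y) / 2) + y ^ 2 / 2
  have hderiv : ∀ y ∈ Ioo (0 : ℝ) 1,
      HasDerivAt h (-(log (1 + y) - log (1 - y)) / 2 + y) y := fun y hy ↦ by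
    refine ((hasDerivAt_binEntropy_one_sub_div_two (by linarith [hy.1]) hy.2).add
      ((hasDerivAt_pow 2 y).div_const 2)).congr_deriv ?_
    ring
  have hanti : AntitoneOn h (Icc 0 1) := by
    apply antitoneOn_of_deriv_nonpos (convex_Icc 0 1) (by fun_prop)
    · rw [interior_Icc]
      exact fun y hy ↦ (hderiv y hy).differentiableAt.differentiableWithinAt
    · rw [interior_Icc]
      intro y hy
      rw [(hderiv y hy).deriv]
      linarith [two_mul_le_log_one_add_sub_log_one_sub hy.1.le hy.2]
  have := hanti (left_mem_Icc.2 zero_le_one) ⟨hx0, hx1⟩ hx0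
  simpa [h, binEntropy_two_inv, le_sub_iff_add_le] using this

/-- For all `0 ≤ x ≤ 1`, `f((1-x)/2) ≤ 1 - x²/(2·ln 2)`. -/
theorem stmt16 (x : ℝ) (hx0 : 0 ≤ x) (hx1 : x ≤ 1) :
    binEnt ((1 - x) / 2) ≤ 1 - x ^ 2 / (2 * Real.log 2) := by
  have hlog2 : 0 < log 2 := log_pos one_lt_two
  calc binEnt ((1 - x) / 2) = binEntropy ((1 - x) / 2) / log 2 :=
        binEnt_eq_binEntropy_div_log_two _
    _ ≤ (log 2 - x ^ 2 / 2) / log 2 := by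
        gcongr
        exact binEntropy_one_sub_div_two_le_log_two_sub hx0 hx1
    _ = 1 - x ^ 2 / (2 * log 2) := by field_simp
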